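/- (Lindeberg bound in the MLMC CLT proof.) With the notation and hypotheses of the MLMC asymptotic normality lemma, for every ε > 0 the Lindeberg quantity F = Var(A)^{-1} ∑_{ℓ=0}^L ∑_{m=1}^{M_ℓ} E[(Y_ℓ^2/M_ℓ^2)·1{Y_ℓ/M_ℓ > ε √(Var A)}] satisfies F ≤ ε^{−δ} TOL^{δ} C_1^{−1−δ/2} C_2 · (β^{(L+1)p} − 1)/(β^p − 1), where p = (1+δ/2)q_3 + (δ/2)q_2 − τ (with the convention that the geometric sum is L+1 when p = 0). -/

import Mathlib

open MeasureTheory ProbabilityTheory Finset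

theorem stmt11 {Ω : Type*} [MeasureSpace Ω] [IsProbabilityMeasure (ℙ : Measure Ω)]
    (G : ℕ → Ω → ℝ) (hGmeas : ∀ ℓ, Measurable (G ℓ))
    (Y : ℕ → Ω → ℝ) (hY : ∀ ℓ, Y ℓ = fun ω => |G ℓ ω - ∫ ω', G ℓ ω'|)
    (β C1 C2 q3 δ τ : ℝ) (hβ : 1 < β) (hC1 : 0 < C1) (hC2 : 0 < C2)
    (hq3 : 0 < q3) (hδ : 0 < δ) (hτ : 0 < τ)
    (hintY : ∀ ℓ, Integrable (fun ω => Y ℓ ω ^ (2 + δ)) ℙ)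
    (hint2 : ∀ ℓ, Integrable (fun ω => Y ℓ ω ^ 2) ℙ)
    (hlow : ∀ ℓ : ℕ, C1 * β ^ (-q3 * (ℓ : ℝ)) ≤ ∫ ω, Y ℓ ω ^ 2)
    (hup : ∀ ℓ : ℕ, ∫ ω, Y ℓ ω ^ (2 + δ) ≤ C2 * β ^ (-τ * (ℓ : ℝ)))
    (TOL : ℝ) (hTOL : 0 < TOL) (L : ℕ) (M : ℕ → ℕ) (hMpos : ∀ ℓ, 0 < M ℓ)
    (q2 : ℝ) (hq2 : 0 < q2) (H : ℕ → ℝ) (hH : ∀ ℓ, 0 < H ℓ)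
    (hM : ∀ ℓ : ℕ, (M ℓ : ℝ) ≥
      β ^ (-q2 * (ℓ : ℝ)) * TOL ^ (-2 : ℝ) * (H ℓ)⁻¹ * ∑ k ∈ range (L + 1), H k)
    (VarA : ℝ) (hVarA : VarA = ∑ ℓ ∈ range (L + 1), (∫ ω, Y ℓ ω ^ 2) / (M ℓ : ℝ))
    (ε : ℝ) (hε : 0 < ε)
    (F : ℝ)
    (hF : F = VarA⁻¹ * ∑ ℓ ∈ range (L + 1), ∑ m ∈ range (M ℓ),
      ∫ ω, (if ε * Real.sqrt VarA < Y ℓ ω / (M ℓ : ℝ)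
        then Y ℓ ω ^ 2 / (M ℓ : ℝ) ^ 2 else 0))
    (p : ℝ) (hp : p = (1 + δ / 2) * q3 + (δ / 2) * q2 - τ) :
    F ≤ ε ^ (-δ) * TOL ^ δ * C1 ^ (-1 - δ / 2) * C2 *
      (if p = 0 then (L : ℝ) + 1 else (β ^ (((L : ℝ) + 1) * p) - 1) / (β ^ p - 1)) := by
  have hβ0 : (0:ℝ) < β := lt_trans one_pos hβ
  have hYnn : ∀ ℓ ω, 0 ≤ Y ℓ ω := by intro ℓ ω; rw [hY]; exact abs_nonneg _
  have hVpos : ∀ ℓ : ℕ, (0:ℝ) < ∫ ω, Y ℓ ω ^ 2 := fun ℓ =>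
    lt_of_lt_of_le (by positivity) (hlow ℓ)
  have hMp : ∀ ℓ, (0:ℝ) < (M ℓ : ℝ) := fun ℓ => by exact_mod_cast hMpos ℓ
  have hVarApos : 0 < VarA := by
    rw [hVarA]
    exact Finset.sum_pos (fun ℓ _ => div_pos (hVpos ℓ) (hMp ℓ)) nonempty_range_add_one
  set s := Real.sqrt VarA with hsdef
  have hs : 0 < s := Real.sqrt_pos.2 hVarApos
  have hJnn : ∀ ℓ : ℕ, (0:ℝ) ≤ ∫ ω, Y ℓ ω ^ (2+δ) := fun ℓ =>
    integral_nonneg fun ω => Real.rpow_nonneg (hYnn ℓ ω) _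
  -- Step A : Markov-type bound on each integral
  have hA : ∀ ℓ : ℕ,
      (∫ ω, (if ε * s < Y ℓ ω / (M ℓ : ℝ) then Y ℓ ω ^ 2 / (M ℓ : ℝ) ^ 2 else 0)) ≤
      (ε*s) ^ (-δ) * (M ℓ : ℝ) ^ (-(2+δ)) * ∫ ω, Y ℓ ω ^ (2+δ) := by
    intro ℓ
    have hm : (0:ℝ) < (M ℓ : ℝ) := hMp ℓ
    have hInt : Integrable
        (fun ω => (ε*s) ^ (-δ) * (M ℓ:ℝ) ^ (-(2+δ)) * Y ℓ ω ^ (2+δ)) ℙ := by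
      simpa [mul_assoc] using
        ((hintY ℓ).const_mul ((ε*s) ^ (-δ) * (M ℓ:ℝ) ^ (-(2+δ))))
    calc (∫ ω, (if ε * s < Y ℓ ω / (M ℓ : ℝ) then Y ℓ ω ^ 2 / (M ℓ : ℝ) ^ 2 else 0))
        ≤ ∫ ω, (ε*s) ^ (-δ) * (M ℓ:ℝ) ^ (-(2+δ)) * Y ℓ ω ^ (2+δ) := by
          apply integral_mono_of_nonneg
          · filter_upwards with ω
            have := hYnn ℓ ω
            split <;> positivity
          · exact hInt
          · filter_upwards with ω
            by_cases hcond : ε * s < Y ℓ ω / (M ℓ:ℝ)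
            · simp only [if_pos hcond]
              set y := Y ℓ ω with hy0
              set m := (M ℓ : ℝ) with hmm
              have hcy : ε*s*m ≤ y := ((lt_div_iff₀ hm).1 hcond).le
              have hy : 0 < y := lt_of_lt_of_le (by positivity) hcy
              have h4 : (ε*s)^δ * m^δ ≤ y^δ := by
                rw [← Real.mul_rpow (by positivity) hm.le]
                exact Real.rpow_le_rpow (by positivity) hcy hδ.le
              have e1 : y ^ ((2:ℝ)+δ) = y^2 * y^δ := by
                rw [Real.rpow_add hy, Real.rpow_two]
              have e2 : m ^ (-((2:ℝ)+δ)) = (m^2)⁻¹ * (m^δ)⁻¹ := by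
                rw [show -((2:ℝ)+δ) = (-2) + (-δ) by ring, Real.rpow_add hm,
                  Real.rpow_neg hm.le, Real.rpow_neg hm.le, Real.rpow_two]
              have e3 : (ε*s)^(-δ) = ((ε*s)^δ)⁻¹ := Real.rpow_neg (by positivity) δ
              have hne : ((ε*s)^δ * m^δ) ≠ 0 := by positivity
              calc y^2/m^2 = (y^2 * ((ε*s)^δ * m^δ)) / (m^2 * ((ε*s)^δ * m^δ)) := by
                    rw [mul_div_mul_right _ _ hne]
                _ ≤ (y^2 * y^δ) / (m^2 * ((ε*s)^δ * m^δ)) := by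
                    gcongr
                _ = (ε*s)^(-δ) * m^(-((2:ℝ)+δ)) * y^((2:ℝ)+δ) := by
                    rw [e1, e2, e3]
                    field_simp
            · simp only [if_neg hcond]
              have := hYnn ℓ ω
              positivity
      _ = (ε*s) ^ (-δ) * (M ℓ:ℝ) ^ (-(2+δ)) * ∫ ω, Y ℓ ω ^ (2+δ) := by
          exact integral_const_mul _ _
  -- rewrite F with inner sums collapsed
  have hF' : F = VarA⁻¹ * ∑ ℓ ∈ range (L+1), (M ℓ:ℝ) *
      ∫ ω, (if ε * s < Y ℓ ω / (M ℓ : ℝ) then Y ℓ ω ^ 2 / (M ℓ : ℝ) ^ 2 else 0) := by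
    rw [hF]
    congr 1
    refine Finset.sum_congr rfl fun ℓ _ => ?_
    rw [Finset.sum_const, Finset.card_range, nsmul_eq_mul]
  -- abbreviation
  set K : ℝ := ε ^ (-δ) * TOL ^ δ * C1 ^ (-1 - δ / 2) * C2 with hK
  have hKpos : 0 < K := by
    rw [hK]; positivity
  -- per-level bound
  have hterm : ∀ ℓ ∈ range (L+1), (M ℓ:ℝ) *
      (∫ ω, (if ε * s < Y ℓ ω / (M ℓ : ℝ) then Y ℓ ω ^ 2 / (M ℓ : ℝ) ^ 2 else 0)) ≤
      VarA * K * β ^ (p * (ℓ:ℝ)) := by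
    intro ℓ hℓ
    have hm : (0:ℝ) < (M ℓ : ℝ) := hMp ℓ
    set m := (M ℓ : ℝ) with hmm
    -- lower bounds on m
    have hVA : (∫ ω, Y ℓ ω ^ 2) / m ≤ VarA := by
      rw [hVarA]
      exact Finset.single_le_sum (fun k _ => div_nonneg (hVpos k).le (hMp k).le) hℓ
    have ha : C1 * β^(-q3*(ℓ:ℝ)) / VarA ≤ m := by
      rw [div_le_iff₀ hVarApos]
      calc C1 * β^(-q3*(ℓ:ℝ)) ≤ ∫ ω, Y ℓ ω ^ 2 := hlow ℓ
        _ = ((∫ ω, Y ℓ ω ^ 2)/m) * m := by field_simp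
        _ ≤ VarA * m := mul_le_mul_of_nonneg_right hVA hm.le
        _ = m * VarA := mul_comm _ _
    have hHineq : (1:ℝ) ≤ (H ℓ)⁻¹ * ∑ k ∈ range (L+1), H k := by
      rw [inv_mul_eq_div, le_div_iff₀ (hH ℓ), one_mul]
      exact Finset.single_le_sum (fun k _ => (hH k).le) hℓ
    have hb2 : β^(-q2*(ℓ:ℝ)) * TOL^(-2:ℝ) ≤ m := by
      calc β^(-q2*(ℓ:ℝ)) * TOL^(-2:ℝ)
          = β^(-q2*(ℓ:ℝ)) * TOL^(-2:ℝ) * 1 := (mul_one _).symm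
        _ ≤ β^(-q2*(ℓ:ℝ)) * TOL^(-2:ℝ) * ((H ℓ)⁻¹ * ∑ k ∈ range (L+1), H k) := by
            refine mul_le_mul_of_nonneg_left hHineq (by positivity)
        _ = β^(-q2*(ℓ:ℝ)) * TOL^(-2:ℝ) * (H ℓ)⁻¹ * ∑ k ∈ range (L+1), H k := by ring
        _ ≤ m := hM ℓ
    -- rpow bounds
    have hm1 : m ^ (-((1:ℝ)+δ/2)) ≤
        C1^(-(1:ℝ)-δ/2) * β^((q3*(1+δ/2))*(ℓ:ℝ)) * VarA^((1:ℝ)+δ/2) := by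
      have h0 : (0:ℝ) < C1 * β^(-q3*(ℓ:ℝ)) / VarA := by positivity
      have h1 := Real.rpow_le_rpow_of_nonpos h0 ha (by linarith : -((1:ℝ)+δ/2) ≤ 0)
      refine h1.trans_eq ?_
      rw [Real.div_rpow (by positivity) hVarApos.le,
        Real.mul_rpow hC1.le (by positivity), ← Real.rpow_mul hβ0.le,
        Real.rpow_neg hVarApos.le, div_inv_eq_mul]
      rw [show -q3*(ℓ:ℝ) * -((1:ℝ)+δ/2) = (q3*(1+δ/2))*(ℓ:ℝ) by ring,
        show -((1:ℝ)+δ/2) = -(1:ℝ)-δ/2 by ring]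
    have hm2 : m ^ (-(δ/2)) ≤ β^((q2*(δ/2))*(ℓ:ℝ)) * TOL^δ := by
      have h0 : (0:ℝ) < β^(-q2*(ℓ:ℝ)) * TOL^(-2:ℝ) := by positivity
      have h1 := Real.rpow_le_rpow_of_nonpos h0 hb2 (by linarith : -(δ/2) ≤ 0)
      refine h1.trans_eq ?_
      rw [Real.mul_rpow (by positivity) (by positivity), ← Real.rpow_mul hβ0.le,
        ← Real.rpow_mul hTOL.le]
      rw [show -q2*(ℓ:ℝ) * -(δ/2) = (q2*(δ/2))*(ℓ:ℝ) by ring,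
        show (-2:ℝ) * -(δ/2) = δ by ring]
    -- split the negative power of m
    have hsplit : m * m^(-((2:ℝ)+δ)) = m^(-((1:ℝ)+δ/2)) * m^(-(δ/2)) := by
      nth_rewrite 1 [← Real.rpow_one m]
      rw [← Real.rpow_add hm, ← Real.rpow_add hm]
      congr 1
      ring
    have hscale : (ε*s)^(-δ) = ε^(-δ) * VarA^(-(δ/2)) := by
      rw [Real.mul_rpow hε.le hs.le]
      congr 1
      rw [hsdef, Real.sqrt_eq_rpow, ← Real.rpow_mul hVarApos.le]
      congr 1
      ring
    calc (M ℓ:ℝ) *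
        (∫ ω, (if ε * s < Y ℓ ω / (M ℓ : ℝ) then Y ℓ ω ^ 2 / (M ℓ : ℝ) ^ 2 else 0))
        ≤ m * ((ε*s) ^ (-δ) * m ^ (-(2+δ)) * ∫ ω, Y ℓ ω ^ (2+δ)) :=
          mul_le_mul_of_nonneg_left (hA ℓ) hm.le
      _ = (ε*s)^(-δ) * (m * m^(-((2:ℝ)+δ))) * ∫ ω, Y ℓ ω ^ (2+δ) := by ring
      _ = ε^(-δ) * VarA^(-(δ/2)) * (m^(-((1:ℝ)+δ/2)) * m^(-(δ/2))) *
            ∫ ω, Y ℓ ω ^ (2+δ) := by rw [hsplit, hscale]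
      _ ≤ ε^(-δ) * VarA^(-(δ/2)) *
            ((C1^(-(1:ℝ)-δ/2) * β^((q3*(1+δ/2))*(ℓ:ℝ)) * VarA^((1:ℝ)+δ/2)) *
              (β^((q2*(δ/2))*(ℓ:ℝ)) * TOL^δ)) * (C2 * β^(-τ*(ℓ:ℝ))) := by
          have h5 : m^(-((1:ℝ)+δ/2)) * m^(-(δ/2)) ≤
              (C1^(-(1:ℝ)-δ/2) * β^((q3*(1+δ/2))*(ℓ:ℝ)) * VarA^((1:ℝ)+δ/2)) *
              (β^((q2*(δ/2))*(ℓ:ℝ)) * TOL^δ) := by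
            apply mul_le_mul hm1 hm2 (by positivity) (by positivity)
          apply mul_le_mul
          · exact mul_le_mul_of_nonneg_left h5 (by positivity)
          · exact hup ℓ
          · exact hJnn ℓ
          · positivity
      _ = VarA * K * β ^ (p*(ℓ:ℝ)) := by
          rw [hK]
          have hV1 : VarA^(-(δ/2)) * VarA^((1:ℝ)+δ/2) = VarA := by
            rw [← Real.rpow_add hVarApos]
            rw [show -(δ/2) + ((1:ℝ)+δ/2) = 1 by ring, Real.rpow_one]
          have hbcomb : β^((q3*(1+δ/2))*(ℓ:ℝ)) * β^((q2*(δ/2))*(ℓ:ℝ)) * β^(-τ*(ℓ:ℝ))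
              = β^(p*(ℓ:ℝ)) := by
            rw [← Real.rpow_add hβ0, ← Real.rpow_add hβ0]
            congr 1
            rw [hp]; ring
          calc ε^(-δ) * VarA^(-(δ/2)) *
              ((C1^(-(1:ℝ)-δ/2) * β^((q3*(1+δ/2))*(ℓ:ℝ)) * VarA^((1:ℝ)+δ/2)) *
                (β^((q2*(δ/2))*(ℓ:ℝ)) * TOL^δ)) * (C2 * β^(-τ*(ℓ:ℝ)))
              = (VarA^(-(δ/2)) * VarA^((1:ℝ)+δ/2)) *
                (ε ^ (-δ) * TOL ^ δ * C1 ^ (-(1:ℝ) - δ / 2) * C2) *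
                (β^((q3*(1+δ/2))*(ℓ:ℝ)) * β^((q2*(δ/2))*(ℓ:ℝ)) * β^(-τ*(ℓ:ℝ))) := by
                ring
            _ = VarA * (ε ^ (-δ) * TOL ^ δ * C1 ^ (-1 - δ / 2) * C2) * β^(p*(ℓ:ℝ)) := by
                rw [hV1, hbcomb]
  -- geometric sum
  have hgeom : ∑ ℓ ∈ range (L+1), β ^ (p*(ℓ:ℝ)) =
      (if p = 0 then (L : ℝ) + 1 else (β ^ (((L : ℝ) + 1) * p) - 1) / (β ^ p - 1)) := by
    have htm : ∀ ℓ : ℕ, β^(p*(ℓ:ℝ)) = (β^p)^ℓ := fun ℓ => by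
      rw [Real.rpow_mul hβ0.le, Real.rpow_natCast]
    by_cases hp0 : p = 0
    · simp only [if_pos hp0, hp0, zero_mul, Real.rpow_zero, Finset.sum_const,
        Finset.card_range, nsmul_eq_mul, mul_one, eq_self_iff_true, if_true]
      push_cast
      ring
    · have hr1 : β^p ≠ 1 := by
        rcases lt_or_gt_of_ne hp0 with hneg | hpos
        · exact ne_of_lt (Real.rpow_lt_one_of_one_lt_of_neg hβ hneg)
        · exact ne_of_gt ((Real.one_lt_rpow_iff_of_pos hβ0).2 (Or.inl ⟨hβ, hpos⟩))
      rw [if_neg hp0]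
      simp_rw [htm]
      rw [geom_sum_eq hr1, ← Real.rpow_natCast (β^p) (L+1), ← Real.rpow_mul hβ0.le]
      push_cast
      rw [mul_comm p ((L:ℝ)+1)]
  -- assemble
  rw [hF']
  calc VarA⁻¹ * ∑ ℓ ∈ range (L+1), (M ℓ:ℝ) *
      ∫ ω, (if ε * s < Y ℓ ω / (M ℓ : ℝ) then Y ℓ ω ^ 2 / (M ℓ : ℝ) ^ 2 else 0)
      ≤ VarA⁻¹ * ∑ ℓ ∈ range (L+1), VarA * K * β ^ (p * (ℓ:ℝ)) := by
        refine mul_le_mul_of_nonneg_left (Finset.sum_le_sum hterm) (by positivity)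
    _ = K * ∑ ℓ ∈ range (L+1), β ^ (p * (ℓ:ℝ)) := by
        rw [← Finset.mul_sum]
        field_simp
    _ = ε ^ (-δ) * TOL ^ δ * C1 ^ (-1 - δ / 2) * C2 *
      (if p = 0 then (L : ℝ) + 1 else (β ^ (((L : ℝ) + 1) * p) - 1) / (β ^ p - 1)) := by
        rw [hgeom, hK]
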